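/- Consider the classical channel with input X ∈ {0,1,2}, outputs Y ∈ {0,1} and Z ∈ {0,1} defined by: Y = 0 if X ∈ {0,1}, Y = 1 if X = 2; Z = 0 if X = 0, Z = 1 if X = 1, and Z uniform on {0,1} if X = 2. Then for every input distribution P_X, H(X|Z) − H(X|Y) < 1, where H denotes Shannon conditional entropy. -/

import Mathlib

/-!
In nats, with `η = negMulLog`, `h = binEntropy` and `s = p₂ / 2`, the difference
`H(X|Z) - H(X|Y)` equals `2 η(s) + η(p₀ + p₁) - h(p₀ + s)`. Since `p₀ + s ∈ [s, 1 - s]`,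
`h(p₀ + s) ≥ h(s)`, so the difference is at most `η(s) + η(1 - 2s) - η(1 - s)`, which by the
grouping rule is `(1 - s) · h(s / (1 - s))`: strictly below `log 2` when `s > 0`, and `0` when `s = 0`.
-/

/-- Shannon entropy (base 2) of a finitely supported distribution. -/
noncomputable def H2 {ι : Type*} [Fintype ι] (q : ι → ℝ) : ℝ :=
  ∑ i : ι, -(q i * Real.logb 2 (q i))

/-- Channel `X → Y` of the example: `Y = 0` if `X ∈ {0,1}`, `Y = 1` if `X = 2`. -/
noncomputable def chY : Fin 3 → Fin 2 → ℝ := fun x y =>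
  if (x = 0 ∨ x = 1) ∧ y = 0 ∨ x = 2 ∧ y = 1 then 1 else 0

/-- Channel `X → Z` of the example: `Z = X` for `X ∈ {0,1}`, `Z` uniform if `X = 2`. -/
noncomputable def chZ : Fin 3 → Fin 2 → ℝ := fun x z =>
  if x = 2 then 1 / 2 else if x = 0 ∧ z = 0 ∨ x = 1 ∧ z = 1 then 1 else 0

open Real Set

lemma H2_eq_sum_negMulLog_div_log_two {ι : Type*} [Fintype ι] (q : ι → ℝ) :
    H2 q = (∑ i, negMulLog (q i)) / log 2 := by
  simp only [H2, negMulLog, logb, Finset.sum_div]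
  congr 1; ext i; ring

lemma negMulLog_add_negMulLog_eq {x y : ℝ} (h : x + y ≠ 0) :
    negMulLog x + negMulLog y = negMulLog (x + y) + (x + y) * binEntropy (x / (x + y)) := by
  set c := x + y
  have hyc : 1 - x / c = y / c := by field_simp; ring
  have hsum : x / c + y / c = 1 := by rw [← add_div, div_self h]
  rw [binEntropy_eq_negMulLog_add_negMulLog_one_sub, hyc]
  calc negMulLog x + negMulLog y
      = negMulLog (c * (x / c)) + negMulLog (c * (y / c)) := by
        rw [mul_div_cancel₀ _ h, mul_div_cancel₀ _ h]
    _ = (x / c + y / c) * negMulLog c + c * (negMulLog (x / c) + negMulLog (y / c)) := by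
        rw [negMulLog_mul, negMulLog_mul]; ring
    _ = negMulLog c + c * (negMulLog (x / c) + negMulLog (y / c)) := by rw [hsum, one_mul]

lemma binEntropy_le_binEntropy_of_mem_Icc {x q : ℝ} (hx : 0 ≤ x) (hq : q ∈ Icc x (1 - x)) :
    binEntropy x ≤ binEntropy q := by
  obtain ⟨hxq, hq1⟩ := hq
  rcases le_or_gt q 2⁻¹ with hq2 | hq2
  · exact binEntropy_strictMonoOn.monotoneOn ⟨hx, hxq.trans hq2⟩ ⟨hx.trans hxq, hq2⟩ hxq
  · rw [← binEntropy_one_sub q]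
    exact binEntropy_strictMonoOn.monotoneOn ⟨hx, by linarith⟩ ⟨by linarith, by linarith⟩
      (by linarith)

lemma negMulLog_add_negMulLog_one_sub_two_mul_sub_lt_log_two {s : ℝ} (hs : 0 ≤ s)
    (hs1 : 2 * s ≤ 1) : negMulLog s + negMulLog (1 - 2 * s) - negMulLog (1 - s) < log 2 := by
  have hlog : 0 < log 2 := log_pos one_lt_two
  have hgroup := negMulLog_add_negMulLog_eq (x := s) (y := 1 - 2 * s) (by linarith)
  rw [show s + (1 - 2 * s) = 1 - s by ring] at hgroup
  rcases hs.eq_or_lt with rfl | hs_pos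
  · simpa using hlog
  · have := binEntropy_le_log_two (p := s / (1 - s))
    nlinarith

lemma two_mul_negMulLog_add_negMulLog_sub_lt_log_two {a b s : ℝ} (ha : 0 ≤ a) (hb : 0 ≤ b)
    (hs : 0 ≤ s) (hsum : a + b + 2 * s = 1) :
    2 * negMulLog s + negMulLog (a + b) - negMulLog (a + s) - negMulLog (b + s) < log 2 := by
  have hbs : b + s = 1 - (a + s) := by linarith
  have hmono : binEntropy s ≤ binEntropy (a + s) :=
    binEntropy_le_binEntropy_of_mem_Icc hs ⟨by linarith, by linarith⟩
  rw [binEntropy_eq_negMulLog_add_negMulLog_one_sub, binEntropy_eq_negMulLog_add_negMulLog_one_sub,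
    ← hbs] at hmono
  rw [show a + b = 1 - 2 * s by linarith]
  linarith [negMulLog_add_negMulLog_one_sub_two_mul_sub_lt_log_two hs (by linarith)]

/-- For the example channel, without a randomized encoding, no input distribution
achieves `H(X|Z) - H(X|Y) = 1`: the difference is strictly below 1 bit. -/
theorem example_channel_no_direct_one_bit
    (p : Fin 3 → ℝ) (hp0 : ∀ x, 0 ≤ p x) (hp1 : ∑ x : Fin 3, p x = 1) :
    (H2 (fun xz : Fin 3 × Fin 2 => p xz.1 * chZ xz.1 xz.2)
        - H2 (fun z : Fin 2 => ∑ x : Fin 3, p x * chZ x z))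
      - (H2 (fun xy : Fin 3 × Fin 2 => p xy.1 * chY xy.1 xy.2)
        - H2 (fun y : Fin 2 => ∑ x : Fin 3, p x * chY x y)) < 1 := by
  rw [Fin.sum_univ_three] at hp1
  have hgap := two_mul_negMulLog_add_negMulLog_sub_lt_log_two (hp0 0) (hp0 1)
    (mul_nonneg (hp0 2) (by norm_num : (0 : ℝ) ≤ 2⁻¹)) (by linarith)
  simp only [H2_eq_sum_negMulLog_div_log_two, Fintype.sum_prod_type, Fin.sum_univ_three,
    Fin.sum_univ_two, chY, chZ]
  simp +decide only [Fin.isValue, ↓reduceIte, mul_one, mul_zero, negMulLog_zero, add_zero,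
    zero_add, one_div]
  rw [← sub_div, ← sub_div, ← sub_div, div_lt_one (log_pos one_lt_two)]
  linarith
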